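/- arXiv:1305.3658 — 2 statements merged into one kernel-verified Lean document; each statement's English description precedes it below -/
import Mathlib

section
/- Let F be the category of finite sets and partial maps, and call a functor G : F^n → F an n-fold smash product if G(⟨1⟩,…,⟨1⟩) = ⟨1⟩ and G preserves coproducts in each variable separately (where the coproduct of ⟨m⟩ and ⟨k⟩ in F is ⟨m+k⟩). Then between any two n-fold smash products there exists exactly one natural isomorphism; in particular, the groupoid of n-fold smash products and natural isomorphisms is contractible (equivalent to the terminal groupoid). -/
open CategoryTheory

/-- Objects of Segal's category `F`: the natural number `n` stands for the
finite set `⟨n⟩ = {1,…,n}` (with `⟨0⟩ = ∅`). -/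
abbrev FCat : Type := ℕ

/-- A partial map `⟨m⟩ → ⟨n⟩` is encoded as a function `Fin m → Option (Fin n)`
(`none` on the complement of the domain of definition). -/
instance : CategoryStruct FCat where
  Hom m n := Fin m → Option (Fin n)
  id _ := fun i => some i
  comp f g := fun i => (f i).bind g

/-- The category `F` of finite sets `⟨n⟩` and partial maps; composition of
partial maps is composition on the largest domain where it is defined. -/
instance : Category FCat where
  id_comp _ := rfl
  comp_id f := by
    funext i
    show (f i).bind (fun j => some j) = f i
    cases f i <;> rfl
  assoc f g h := by
    funext i
    show ((f i).bind g).bind h = (f i).bind (fun j => (g j).bind h)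
    cases f i <;> rfl

/-- The underlying `Option`-valued function of a morphism of `F`. -/
def FCat.app {m n : FCat} (f : m ⟶ n) : Fin m → Option (Fin n) := f

/-- A morphism of `F` is inert if the preimage of each element of the codomain
consists of exactly one element. -/
def FCat.Inert {m n : FCat} (f : m ⟶ n) : Prop :=
  ∀ j : Fin n, ∃! i : Fin m, FCat.app f i = some j

/-- A morphism of `F` is active if its domain of definition is the whole source. -/
def FCat.Active {m n : FCat} (f : m ⟶ n) : Prop :=
  ∀ i : Fin m, FCat.app f i ≠ none

open Limits

/-- The functor `F → F^k` inserting an object into the `i`-th coordinate, the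
other coordinates being fixed at `x`. -/
def insFunctor (k : ℕ) (x : Fin k → FCat) (i : Fin k) :
    FCat ⥤ (∀ _ : Fin k, FCat) where
  obj a := fun j => if j = i then a else x j
  map {a b} f := fun j =>
    if h : j = i then
      eqToHom (if_pos h) ≫ f ≫ eqToHom (if_pos h).symm
    else
      eqToHom ((if_neg h).trans (if_neg h).symm)
  map_id a := by
    funext j
    by_cases h : j = i
    · subst h; simp
    · simp [h]
  map_comp {a b c} f g := by
    funext j
    by_cases h : j = i
    · subst h; simp
    · simp [h]

/-- A functor `G : F^k → F` is a `k`-fold smash product if `G(⟨1⟩,…,⟨1⟩) = ⟨1⟩`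
and `G` preserves (finite) coproducts in each variable separately. -/
def IsSmash (k : ℕ) (G : (∀ _ : Fin k, FCat) ⥤ FCat) : Prop :=
  G.obj (fun _ => (1 : FCat)) = (1 : FCat) ∧
    ∀ (x : Fin k → FCat) (i : Fin k),
      PreservesFiniteCoproducts (insFunctor k x i ⋙ G)

/-! Mapping a point of `G(⟨1⟩,…,⟨1⟩) = ⟨1⟩` along `G(pick x j)`, where `pick x j` picks the tuple
`j ∈ ∏ᵢ ⟨x i⟩`, identifies `G x` with `∏ᵢ ⟨x i⟩`. This holds at `(⟨1⟩,…,⟨1⟩)`, and survives replacing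
one coordinate `⟨1⟩` by `⟨n⟩ = ∐ⁿ ⟨1⟩` because `G` preserves that coproduct. Under this
identification `G f` is the product partial map `∏ᵢ fᵢ`: a map out of `(⟨1⟩,…,⟨1⟩)` that is undefined
in some coordinate factors through an object with a coordinate `⟨0⟩`, which `G` sends to `∅`.
Hence any two smash products are isomorphic, and a natural transformation between them is
determined by its component at `(⟨1⟩,…,⟨1⟩)`, where there is only one isomorphism `⟨1⟩ ≅ ⟨1⟩`. -/

namespace FCat

variable {m n p : FCat}

@[simp] lemma comp_apply (f : m ⟶ n) (g : n ⟶ p) (q : Fin m) : (f ≫ g) q = (f q).bind g := rfl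

@[simp] lemma id_apply (q : Fin m) : (𝟙 m : m ⟶ m) q = some q := rfl

@[simp] lemma eqToHom_apply (h : m = n) (q : Fin m) :
    (eqToHom h : m ⟶ n) q = some (Fin.cast h q) := by
  subst h; rfl

lemma isSome_hom_apply (e : m ≅ n) (q : Fin m) : (e.hom q).isSome := by
  have h : (e.hom q).bind e.inv = some q := congrFun e.hom_inv_id q
  cases hq : e.hom q <;> simp_all

lemma subsingleton_iso (hn : n ≤ 1) : Subsingleton (m ≅ n) := by
  have : Subsingleton (Fin n) := Fin.subsingleton_iff_le_one.2 hn
  refine ⟨fun e e' => Iso.ext (funext fun q => ?_)⟩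
  obtain ⟨a, ha⟩ := Option.isSome_iff_exists.1 (isSome_hom_apply e q)
  obtain ⟨b, hb⟩ := Option.isSome_iff_exists.1 (isSome_hom_apply e' q)
  rw [ha, hb, Subsingleton.elim a b]

def isoOfEquiv (e : Fin m ≃ Fin n) : m ≅ n where
  hom q := some (e q)
  inv q := some (e.symm q)
  hom_inv_id := funext fun q => congrArg some (e.symm_apply_apply q)
  inv_hom_id := funext fun q => congrArg some (e.apply_symm_apply q)

@[simp] lemma isoOfEquiv_hom_apply (e : Fin m ≃ Fin n) (q : Fin m) :
    (isoOfEquiv e).hom q = some (e q) := rfl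

def stdInj (n : ℕ) (j : Fin n) : (1 : FCat) ⟶ n := fun _ => some j

def isColimitStdInj (n : ℕ) : IsColimit (Cofan.mk (n : FCat) (stdInj n)) :=
  Cofan.IsColimit.mk _ (fun t q => t.inj q 0)
    (fun t j => funext fun p => by rw [Subsingleton.elim p 0]; rfl)
    (fun t f hf => funext fun q => congrFun (hf q) 0)

section Coproduct

variable {J : Type} {X : J → FCat} {c : Cofan X}

lemma exists_desc_apply (hc : IsColimit c) (φ : ∀ j, X j ⟶ m) :
    ∃ h : c.pt ⟶ m, ∀ j p, (c.inj j p).bind h = φ j p :=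
  ⟨Cofan.IsColimit.desc hc φ, fun j p => congrFun (Cofan.IsColimit.fac hc φ j) p⟩

lemma isSome_inj_apply (hc : IsColimit c) (j : J) (p : Fin (X j)) : (c.inj j p).isSome := by
  obtain ⟨h, hh⟩ := exists_desc_apply hc (m := 1) fun _ _ => some 0
  have := hh j p
  cases hq : c.inj j p <;> simp_all

lemma inj_apply_injective (hc : IsColimit c) {j j' : J} {p : Fin (X j)} {p' : Fin (X j')}
    {q : Fin c.pt} (hq : c.inj j p = some q) (hq' : c.inj j' p' = some q) :
    (⟨j, p⟩ : Σ a, Fin (X a)) = ⟨j', p'⟩ := by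
  classical
  obtain ⟨h, hh⟩ := exists_desc_apply hc (m := 1) fun a r =>
    if (⟨a, r⟩ : Σ a, Fin (X a)) = ⟨j, p⟩ then some 0 else none
  have h₁ := hh j p
  have h₂ := hh j' p'
  rw [hq, Option.bind_some, if_pos rfl] at h₁
  rw [hq', Option.bind_some, h₁] at h₂
  by_contra hne
  simp [Ne.symm hne] at h₂

lemma exists_inj_apply_eq (hc : IsColimit c) (q : Fin c.pt) :
    ∃ j p, c.inj j p = some q := by
  classical
  by_contra! hq
  have h : (𝟙 c.pt : c.pt ⟶ c.pt) = fun r => if r = q then none else some r :=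
    Cofan.IsColimit.hom_ext hc _ _ fun j => funext fun p => by
      cases hp : c.inj j p with
      | none => simp [hp]
      | some r => simp [hp, show r ≠ q by rintro rfl; exact hq j p hp]
  simpa using congrFun h q

lemma exists_sigmaEquiv (hc : IsColimit c) :
    ∃ e : (Σ j, Fin (X j)) ≃ Fin c.pt, ∀ j p, c.inj j p = some (e ⟨j, p⟩) := by
  let f : (Σ j, Fin (X j)) → Fin c.pt := fun jp => (c.inj jp.1 jp.2).get (isSome_inj_apply hc _ _)
  have hf : ∀ j p, c.inj j p = some (f ⟨j, p⟩) := fun j p => (Option.some_get _).symm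
  refine ⟨Equiv.ofBijective f ⟨fun a b hab => ?_, fun q => ?_⟩, hf⟩
  · exact inj_apply_injective hc (hf a.1 a.2) ((hf b.1 b.2).trans (congrArg some hab.symm))
  · obtain ⟨j, p, hjp⟩ := exists_inj_apply_eq hc q
    exact ⟨⟨j, p⟩, Option.some_injective _ ((hf j p).symm.trans hjp)⟩

end Coproduct

end FCat

section Smash

variable {k : ℕ}

abbrev ones (k : ℕ) : Fin k → FCat := fun _ => 1

def pick (x : Fin k → FCat) (j : ∀ i, Fin (x i)) : ones k ⟶ x := fun i _ => some (j i)

/-- The partial map `∏ᵢ ⟨x i⟩ → ∏ᵢ ⟨y i⟩` induced by `f`: defined exactly where every `f i` is. -/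
def piApply {x y : Fin k → FCat} (f : x ⟶ y) (j : ∀ i, Fin (x i)) : Option (∀ i, Fin (y i)) :=
  if h : ∀ i, (f i (j i)).isSome then some fun i => (f i (j i)).get (h i) else none

lemma pick_comp_eq_pick {x y : Fin k → FCat} {f : x ⟶ y} {j : ∀ i, Fin (x i)}
    {j' : ∀ i, Fin (y i)} (h : piApply f j = some j') : pick x j ≫ f = pick y j' := by
  unfold piApply at h
  split_ifs at h with hj
  cases h
  exact funext fun i => funext fun _ => (Option.some_get (hj i)).symm

lemma exists_apply_eq_none_of_piApply_eq_none {x y : Fin k → FCat} {f : x ⟶ y}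
    {j : ∀ i, Fin (x i)} (h : piApply f j = none) : ∃ i, f i (j i) = none := by
  unfold piApply at h
  split_ifs at h with hj
  push Not at hj
  simpa using hj

lemma exists_eq_comp_of_apply_eq_none {x y : Fin k → FCat} (g : x ⟶ y) (i : Fin k)
    (hg : ∀ p, g i p = none) :
    ∃ (z : Fin k → FCat) (a : x ⟶ z) (b : z ⟶ y), z i = 0 ∧ g = a ≫ b := by
  classical
  refine ⟨fun c => if c = i then 0 else y c,
    fun c => if h : c = i then fun _ => none else g c ≫ eqToHom (if_neg h).symm,
    fun c => if h : c = i then fun q => (Fin.cast (if_pos h) q).elim0 else eqToHom (if_neg h),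
    if_pos rfl, funext fun c => funext fun p => ?_⟩
  by_cases h : c = i
  · subst h
    simp [hg]
  · simp only [Pi.comp_apply, h, ↓reduceDIte, FCat.comp_apply, FCat.eqToHom_apply]
    cases g c p <;> rfl

lemma insFunctor_obj_self (x : Fin k → FCat) (i : Fin k) (a : FCat) :
    (insFunctor k x i).obj a i = a := if_pos rfl

lemma insFunctor_obj_apply_self (x : Fin k → FCat) (i : Fin k) :
    (insFunctor k x i).obj (x i) = x :=
  funext fun c => by by_cases h : c = i <;> simp [insFunctor, h]

@[simps]
def insSplit (x : Fin k → FCat) (i : Fin k) (n : ℕ) :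
    (∀ c, Fin ((insFunctor k x i).obj n c)) ≃ Fin n × ∀ c, Fin ((insFunctor k x i).obj 1 c) where
  toFun j := (Fin.cast (insFunctor_obj_self x i n) (j i), fun c =>
    if h : c = i then Fin.cast (if_pos h).symm 0 else Fin.cast ((if_neg h).trans (if_neg h).symm) (j c))
  invFun mj c :=
    if h : c = i then Fin.cast (if_pos h).symm mj.1 else Fin.cast ((if_neg h).trans (if_neg h).symm) (mj.2 c)
  left_inv j := funext fun c => by
    by_cases h : c = i
    · subst h; simp only [↓reduceDIte]; rfl
    · simp only [h, ↓reduceDIte]; rfl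
  right_inv mj := by
    refine Prod.ext (by simp only [↓reduceDIte]; rfl) (funext fun c => ?_)
    by_cases h : c = i
    · subst h
      exact (Fin.subsingleton_iff_le_one.2 (insFunctor_obj_self x c 1).le).elim _ _
    · simp only [h, ↓reduceDIte]; rfl

lemma pick_eq_pick_comp_map (x : Fin k → FCat) (i : Fin k) (n : ℕ)
    (j : ∀ c, Fin ((insFunctor k x i).obj n c)) :
    pick _ j =
      pick _ (insSplit x i n j).2 ≫ (insFunctor k x i).map (FCat.stdInj n (insSplit x i n j).1) := by
  funext c p
  by_cases h : c = i
  · subst h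
    simp only [insFunctor, pick, Pi.comp_apply, ↓reduceDIte, FCat.comp_apply, Option.bind_some,
      FCat.eqToHom_apply, FCat.stdInj]
    rfl
  · simp only [insSplit_apply]
    simp only [insFunctor, h, pick, Pi.comp_apply, ↓reduceDIte, FCat.comp_apply,
      Option.bind_some, FCat.eqToHom_apply]
    rfl

variable {G : (Fin k → FCat) ⥤ FCat}

/-- `G x` is identified with `∏ᵢ ⟨x i⟩` by pushing the points of `G (ones k)` forward along the
maps `pick x j`. -/
def HasCanonicalEquiv (G : (Fin k → FCat) ⥤ FCat) (x : Fin k → FCat) : Prop :=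
  ∃ e : (∀ i, Fin (x i)) ≃ Fin (G.obj x), ∀ j p, G.map (pick x j) p = some (e j)

lemma hasCanonicalEquiv_ones (h : G.obj (ones k) = 1) : HasCanonicalEquiv G (ones k) := by
  have : Subsingleton (Fin (G.obj (ones k))) := Fin.subsingleton_iff_le_one.2 h.le
  refine ⟨(Equiv.ofUnique _ (Fin 1)).trans (finCongr h.symm), fun j p => ?_⟩
  have : pick (ones k) j = 𝟙 _ := funext fun i => funext fun _ => congrArg some (Subsingleton.elim _ _)
  rw [this, G.map_id]
  exact congrArg some (Subsingleton.elim _ _)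

lemma HasCanonicalEquiv.insFunctor_obj {x : Fin k → FCat} {i : Fin k}
    [PreservesFiniteCoproducts (insFunctor k x i ⋙ G)]
    (h : HasCanonicalEquiv G ((insFunctor k x i).obj 1)) (n : ℕ) :
    HasCanonicalEquiv G ((insFunctor k x i).obj n) := by
  obtain ⟨e, he⟩ := h
  obtain ⟨e', he'⟩ := FCat.exists_sigmaEquiv
    (isColimitCofanMkObjOfIsColimit (insFunctor k x i ⋙ G) _ _ (FCat.isColimitStdInj n))
  refine ⟨(insSplit x i n).trans ((Equiv.prodCongr (Equiv.refl _) e).trans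
    ((Equiv.sigmaEquivProd _ _).symm.trans e')), fun j p => ?_⟩
  rw [pick_eq_pick_comp_map, G.map_comp, FCat.comp_apply, he, Option.bind_some]
  exact he' _ _

lemma IsSmash.hasCanonicalEquiv (hG : IsSmash k G) (x : Fin k → FCat) : HasCanonicalEquiv G x := by
  suffices ∀ s : Finset (Fin k), ∀ x : Fin k → FCat, (∀ i ∉ s, x i = 1) → HasCanonicalEquiv G x from
    this Finset.univ x (by simp)
  intro s
  induction s using Finset.induction_on with
  | empty =>
    intro x hx
    obtain rfl : x = ones k := funext fun i => hx i (Finset.notMem_empty i)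
    exact hasCanonicalEquiv_ones hG.1
  | insert i s _ ih =>
    intro x hx
    have := hG.2 x i
    have h₁ : HasCanonicalEquiv G ((insFunctor k x i).obj 1) := ih _ fun c hc => by
      by_cases h : c = i
      · simp [insFunctor, h]
      · simp [insFunctor, h, hx c (by simp [h, hc])]
    simpa only [insFunctor_obj_apply_self] using h₁.insFunctor_obj (x i)

namespace IsSmash

variable (hG : IsSmash k G)
include hG

noncomputable def equiv (x : Fin k → FCat) : (∀ i, Fin (x i)) ≃ Fin (G.obj x) :=
  (hG.hasCanonicalEquiv x).choose

lemma map_pick_apply (x : Fin k → FCat) (j : ∀ i, Fin (x i)) (p : Fin (G.obj (ones k))) :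
    G.map (pick x j) p = some (hG.equiv x j) :=
  (hG.hasCanonicalEquiv x).choose_spec j p

lemma isEmpty_obj {x : Fin k → FCat} {i : Fin k} (h : x i = 0) : IsEmpty (Fin (G.obj x)) :=
  ⟨fun q => (Fin.cast h ((hG.equiv x).symm q i)).elim0⟩

lemma map_apply_eq_none {x y : Fin k → FCat} (g : x ⟶ y) (i : Fin k) (hg : ∀ p, g i p = none)
    (p : Fin (G.obj x)) : G.map g p = none := by
  obtain ⟨z, a, b, hz, rfl⟩ := exists_eq_comp_of_apply_eq_none g i hg
  have := hG.isEmpty_obj hz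
  rw [G.map_comp, FCat.comp_apply]
  cases G.map a p with
  | none => rfl
  | some q => exact isEmptyElim q

lemma map_apply_equiv {y z : Fin k → FCat} (f : y ⟶ z) (j : ∀ i, Fin (y i)) :
    G.map f (hG.equiv y j) = (piApply f j).map (hG.equiv z) := by
  let p := hG.equiv (ones k) fun _ => 0
  have hf : G.map f (hG.equiv y j) = G.map (pick y j ≫ f) p := by
    rw [G.map_comp, FCat.comp_apply, hG.map_pick_apply]
    rfl
  rw [hf]
  cases h : piApply f j with
  | some j' => rw [pick_comp_eq_pick h, hG.map_pick_apply]; rfl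
  | none =>
    obtain ⟨i, hi⟩ := exists_apply_eq_none_of_piApply_eq_none h
    exact hG.map_apply_eq_none _ i (fun _ => hi) p

lemma natTrans_ext {G' : (Fin k → FCat) ⥤ FCat} {α β : G ⟶ G'}
    (h : α.app (ones k) = β.app (ones k)) : α = β := by
  refine NatTrans.ext (funext fun x => funext fun q => ?_)
  obtain ⟨j, rfl⟩ := (hG.equiv x).surjective q
  let p := hG.equiv (ones k) fun _ => 0
  have hα := congrFun (α.naturality (pick x j)) p
  have hβ := congrFun (β.naturality (pick x j)) p
  simp only [FCat.comp_apply, hG.map_pick_apply, Option.bind_some] at hα hβ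
  rw [hα, hβ, h]

noncomputable def natIso {G' : (Fin k → FCat) ⥤ FCat} (hG' : IsSmash k G') :
    G ≅ G' :=
  NatIso.ofComponents (fun x => FCat.isoOfEquiv ((hG.equiv x).symm.trans (hG'.equiv x)))
    fun {y z} f => funext fun q => by
      obtain ⟨j, rfl⟩ := (hG.equiv y).surjective q
      simp only [FCat.comp_apply, hG.map_apply_equiv, FCat.isoOfEquiv_hom_apply,
        Equiv.trans_apply, Equiv.symm_apply_apply, Option.bind_some, hG'.map_apply_equiv]
      cases piApply f j <;> simp

end IsSmash

end Smash

/-- Between any two `k`-fold smash products there is exactly one natural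
isomorphism; the groupoid of `k`-fold smash products is contractible. -/
theorem statement6 (k : ℕ) (G G' : (∀ _ : Fin k, FCat) ⥤ FCat)
    (hG : IsSmash k G) (hG' : IsSmash k G') :
    ∃! _α : G ≅ G', True := by
  refine ⟨hG.natIso hG', trivial, fun α _ => Iso.ext (hG.natTrans_ext ?_)⟩
  have : Subsingleton (G.obj (ones k) ≅ G'.obj (ones k)) := FCat.subsingleton_iso hG'.1.le
  exact congrArg Iso.hom (Subsingleton.elim (α.app _) ((hG.natIso hG').app _))
end

section
/- For n ≥ 2 and any nonempty subset A ⊆ {1, …, n−1}, let Λ^A[n] ⊆ Δ^n denote the union of all the codimension-one faces ∂_j Δ^n with j ∉ A (the generalized inner horn). Then the inclusion Λ^A[n] → Δ^n is inner anodyne. In particular, for n ≥ 2 the inclusion ∂_0Δ^n ∪ ∂_nΔ^n → Δ^n of the union of the two outer faces is inner anodyne. -/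
open CategoryTheory Limits Simplicial SSet

/-- `f` is a retract of `g` in the arrow category. -/
def IsRetractOf {X Y X' Y' : SSet} (f : X ⟶ Y) (g : X' ⟶ Y') : Prop :=
  ∃ (s : X ⟶ X') (r : X' ⟶ X) (s' : Y ⟶ Y') (r' : Y' ⟶ Y),
    s ≫ r = 𝟙 X ∧ s' ≫ r' = 𝟙 Y ∧ s ≫ g = f ≫ s' ∧ g ≫ r' = r ≫ f

/-- Stability of a class of maps of simplicial sets under pushout. -/
def StableUnderPushout (W : MorphismProperty SSet) : Prop :=
  ∀ ⦃A B A' B' : SSet⦄ (f : A ⟶ B) (g : A ⟶ A') (f' : A' ⟶ B') (g' : B ⟶ B'),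
    IsPushout g f f' g' → W f → W f'

/-- Stability of a class of maps of simplicial sets under retracts. -/
def StableUnderRetract (W : MorphismProperty SSet) : Prop :=
  ∀ ⦃X Y X' Y' : SSet⦄ (f : X ⟶ Y) (g : X' ⟶ Y'), IsRetractOf f g → W g → W f

/-- The inclusion functor of the initial segment `{i | i < j}` of a preorder. -/
def iioInclusion {J : Type} [Preorder J] (j : J) : Set.Iio j ⥤ J :=
  Monotone.functor (f := (Subtype.val : Set.Iio j → J)) fun _ _ h => h

/-- The cocone on the restriction of `F : J ⥤ SSet` to `{i | i < j}` with
apex `F.obj j`. -/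
def restrictedCocone {J : Type} [Preorder J] (F : J ⥤ SSet) (j : J) :
    Cocone (iioInclusion j ⋙ F) where
  pt := F.obj j
  ι :=
    { app := fun i => F.map (homOfLE i.2.le)
      naturality := by
        intro a b g
        dsimp
        rw [Category.comp_id, ← F.map_comp]
        exact congrArg F.map (Subsingleton.elim _ _) }

/-- Stability of a class of maps of simplicial sets under transfinite
composition: for every well-ordered chain `F : J ⥤ SSet` which is continuous
at limit stages and all of whose successor maps lie in `W`, the transfinite
composite `F(⊥) ⟶ colim F` lies in `W`. -/
def StableUnderTransfiniteComposition (W : MorphismProperty SSet) : Prop :=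
  ∀ (J : Type) [LinearOrder J] [SuccOrder J] [OrderBot J] [WellFoundedLT J]
    (F : J ⥤ SSet) (c : Cocone F), IsColimit c →
    (∀ j : J, ¬IsMax j → W (F.map (homOfLE (Order.le_succ j)))) →
    (∀ j : J, Order.IsSuccLimit j → Nonempty (IsColimit (restrictedCocone F j))) →
    W (c.ι.app ⊥)

/-- A weakly saturated class of maps of simplicial sets: one closed under
pushouts, retracts and transfinite composition. -/
def WeaklySaturated (W : MorphismProperty SSet) : Prop :=
  StableUnderPushout W ∧ StableUnderRetract W ∧ StableUnderTransfiniteComposition W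

/-- A class of maps of simplicial sets containing all inner horn inclusions
`Λ^n_k → Δ^n`, `0 < k < n`. -/
def ContainsInnerHorns (W : MorphismProperty SSet) : Prop :=
  ∀ (n : ℕ) (i : Fin (n + 1)), 0 < (i : ℕ) → (i : ℕ) < n → W (horn n i).ι

/-- A map of simplicial sets is inner anodyne if it lies in the saturation of
the inner horn inclusions, i.e. in every weakly saturated class containing
them. -/
def InnerAnodyne {X Y : SSet} (f : X ⟶ Y) : Prop :=
  ∀ W : MorphismProperty SSet, WeaklySaturated W → ContainsInnerHorns W → W f

/-- The generalized inner horn `Λ^A[n] ⊆ Δ^n`: the union of all the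
codimension-one faces `∂_j Δ^n` with `j ∉ A`.  A simplex of `Δ[n]` belongs to
it iff its vertices omit some `j ∉ A`. -/
def genHorn (n : ℕ) (A : Set (Fin (n + 1))) : SSet where
  obj m :=
    {α : Δ[n].obj m //
      ∃ j : Fin (n + 1), j ∉ A ∧ j ∉ Set.range (stdSimplex.asOrderHom α)}
  map {m₁ m₂} f := TypeCat.ofHom fun α =>
    ⟨Δ[n].map f α.1, by
      obtain ⟨j, hj, hj'⟩ := α.2
      exact ⟨j, hj, fun hmem => hj' (Set.range_comp_subset_range _ _ hmem)⟩⟩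

/-- The inclusion `Λ^A[n] → Δ^n`. -/
def genHornInclusion (n : ℕ) (A : Set (Fin (n + 1))) : genHorn n A ⟶ Δ[n] where
  app _ := TypeCat.ofHom fun α => α.1

/-!
Induct on `n + |A|`. For `A = {k}`, `Λ^A[n]` is the inner horn `Λ^n_k`. Otherwise pick `k ∈ A`
with `A \ {k}` nonempty. Then `Λ^{A \ {k}}[n] = Λ^A[n] ∪ ∂_kΔ^n`, and `Λ^A[n] ∩ ∂_kΔ^n` is the
generalized horn `Λ^B[n-1]` of the face `∂_kΔ^n ≅ Δ^{n-1}`, where `B = δ_k⁻¹(A)` is again a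
nonempty set of inner vertices with `|B| < |A|`. So `Λ^A[n] → Λ^{A \ {k}}[n]` is a pushout of
`Λ^B[n-1] → Δ^{n-1}`, and `Λ^A[n] → Δ^n` factors as this map followed by `Λ^{A \ {k}}[n] → Δ^n`.
-/

universe u

lemma WeaklySaturated.comp {W : MorphismProperty SSet} (hW : WeaklySaturated W)
    {X Y Z : SSet} {f : X ⟶ Y} {g : Y ⟶ Z} (hf : W f) (hg : W g) : W (f ≫ g) := by
  let F := ComposableArrows.mk₂ f g
  have hlast : IsTerminal (Fin.last 2) :=
    IsTerminal.ofUniqueHom (fun j => homOfLE (Fin.le_last j)) fun _ _ => Subsingleton.elim _ _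
  have h := hW.2.2 (Fin 3) F _ (colimitOfDiagramTerminal hlast F) ?_
    fun j hj => (Order.not_isSuccLimit_of_isSuccArchimedean hj).elim
  · rwa [show f ≫ g = F.map' 0 2 from (F.map'_comp 0 1 2).symm]
  · intro j hj
    fin_cases j
    exacts [hf, hg, (hj fun b _ => Fin.le_last b).elim]

namespace InnerAnodyne

variable {X Y Z X' Y' : SSet}

lemma of_isPushout {Z' : SSet} {f : X ⟶ Y} {g : X ⟶ X'} {f' : X' ⟶ Z'} {g' : Y ⟶ Z'}
    (h : IsPushout g f f' g') (hf : InnerAnodyne f) : InnerAnodyne f' :=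
  fun W hW hC => hW.1 f g f' g' h (hf W hW hC)

lemma of_isRetractOf {f : X ⟶ Y} {g : X' ⟶ Y'} (h : IsRetractOf f g) (hg : InnerAnodyne g) :
    InnerAnodyne f :=
  fun W hW hC => hW.2.1 f g h (hg W hW hC)

lemma comp {f : X ⟶ Y} {g : Y ⟶ Z} (hf : InnerAnodyne f) (hg : InnerAnodyne g) :
    InnerAnodyne (f ≫ g) :=
  fun W hW hC => hW.comp (hf W hW hC) (hg W hW hC)

end InnerAnodyne

lemma innerAnodyne_horn_ι {n : ℕ} {k : Fin (n + 1)} (h₀ : 0 < (k : ℕ)) (hn : (k : ℕ) < n) :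
    InnerAnodyne (horn n k).ι :=
  fun _ _ hC => hC n k h₀ hn

lemma IsRetractOf.of_iso {X X' Y : SSet} {f : X ⟶ Y} {g : X' ⟶ Y} (e : X ≅ X')
    (h : e.hom ≫ g = f) : IsRetractOf f g :=
  ⟨e.hom, e.inv, 𝟙 Y, 𝟙 Y, e.hom_inv_id, Category.id_comp _, by simp [h], by simp [← h]⟩

lemma CategoryTheory.Limits.Types.isPushout_of_injective {X₁ X₂ X₃ X₄ : Type u}
    {t : X₁ ⟶ X₂} {l : X₁ ⟶ X₃} {r : X₂ ⟶ X₄} {b : X₃ ⟶ X₄} (w : t ≫ r = l ≫ b)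
    (hl : Function.Injective l) (hr : Function.Injective r) (hb : Function.Injective b)
    (hcover : ∀ x₄, x₄ ∈ Set.range r ∨ x₄ ∈ Set.range b)
    (hinter : ∀ x₂ x₃, r x₂ = b x₃ → ∃ x₁, t x₁ = x₂ ∧ l x₁ = x₃) :
    IsPushout t l r b :=
  have : Mono r := (mono_iff_injective r).2 hr
  isPushout_of_isPullback_of_mono' ((isPullback_iff t r l b).2 ⟨w, fun _ _ h => hl h.2, hinter⟩)
    (Set.eq_univ_of_forall hcover) fun _ _ _ _ h => hb h

lemma CategoryTheory.IsPushout.of_app {K C : Type*} [Category K] [Category C]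
    {X₁ X₂ X₃ X₄ : K ⥤ C} {t : X₁ ⟶ X₂} {l : X₁ ⟶ X₃} {r : X₂ ⟶ X₄} {b : X₃ ⟶ X₄}
    (w : t ≫ r = l ≫ b) (h : ∀ k, IsPushout (t.app k) (l.app k) (r.app k) (b.app k)) :
    IsPushout t l r b :=
  .of_isColimit (c := PushoutCocone.mk r b w) <| evaluationJointlyReflectsColimits _ fun k =>
    (isColimitMapCoconePushoutCoconeEquiv ((evaluation _ _).obj k) w).symm (h k).isColimit

lemma Fin.pos_and_lt_of_succAbove {m : ℕ} {k : Fin (m + 2)} {i : Fin (m + 1)}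
    (hk : 0 < (k : ℕ) ∧ (k : ℕ) < m + 1)
    (hi : 0 < (k.succAbove i : ℕ) ∧ (k.succAbove i : ℕ) < m + 1) :
    0 < (i : ℕ) ∧ (i : ℕ) < m := by
  unfold Fin.succAbove at hi
  split_ifs at hi with h <;> simp only [Fin.lt_def, Fin.val_castSucc, Fin.val_succ] at h hi <;>
    omega

lemma Fin.ncard_preimage_succAbove {m : ℕ} (k : Fin (m + 1)) (A : Set (Fin (m + 1))) :
    (k.succAbove ⁻¹' A).ncard = (A \ {k}).ncard := by
  have hpre : k.succAbove ⁻¹' A = k.succAbove ⁻¹' (A \ {k}) := by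
    ext
    simp [Fin.succAbove_ne]
  rw [hpre, Set.ncard_preimage_of_injective_subset_range Fin.succAbove_right_injective]
  simp [Fin.range_succAbove]

namespace genHorn

variable {n : ℕ}

def ofSubset {A A' : Set (Fin (n + 1))} (h : A' ⊆ A) : genHorn n A ⟶ genHorn n A' where
  app _ := TypeCat.ofHom fun α => ⟨α.1, α.2.imp fun _ hj => ⟨mt (@h _) hj.1, hj.2⟩⟩

lemma ofSubset_comp_inclusion {A A' : Set (Fin (n + 1))} (h : A' ⊆ A) :
    ofSubset h ≫ genHornInclusion n A' = genHornInclusion n A := rfl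

def face (k : Fin (n + 2)) {A : Set (Fin (n + 2))} (hk : k ∉ A) : Δ[n] ⟶ genHorn (n + 1) A where
  app o := TypeCat.ofHom fun α =>
    ⟨(stdSimplex.δ k).app o α, k, hk, fun ⟨_, hx⟩ => k.succAbove_ne _ hx⟩
  naturality _ _ _ := rfl

def mapδ (k : Fin (n + 2)) (A : Set (Fin (n + 2))) :
    genHorn n (k.succAbove ⁻¹' A) ⟶ genHorn (n + 1) A where
  app o := TypeCat.ofHom fun β => ⟨(stdSimplex.δ k).app o β.1, by
    obtain ⟨i, hiA, hi⟩ := β.2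
    exact ⟨k.succAbove i, hiA, fun ⟨x, hx⟩ => hi ⟨x, Fin.succAbove_right_injective hx⟩⟩⟩
  naturality _ _ _ := rfl

lemma isPushout_mapδ {k : Fin (n + 2)} {A : Set (Fin (n + 2))} (hk : k ∈ A) :
    IsPushout (mapδ.{u} k A) (genHornInclusion n (k.succAbove ⁻¹' A))
      (ofSubset (Set.sdiff_subset : A \ {k} ⊆ A)) (face k fun h => h.2 rfl) := by
  refine IsPushout.of_app rfl fun o => Types.isPushout_of_injective rfl
    Subtype.val_injective (fun _ _ h => Subtype.ext congr($h.1))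
    (fun _ _ h => (mono_iff_injective ((stdSimplex.{u}.δ k).app o)).1 inferInstance congr($h.1))
    ?_ ?_
  · rintro ⟨α, j, hjA, hj⟩
    by_cases hjk : j = k
    · subst hjk
      refine Or.inr ⟨stdSimplex.objEquiv.symm
        (SimplexCategory.factor_δ (stdSimplex.objEquiv α) j), ?_⟩
      exact Subtype.ext (stdSimplex.objEquiv.injective
        (SimplexCategory.factor_δ_spec _ j fun x hx => hj ⟨x, hx⟩))
    · exact Or.inl ⟨⟨α, j, fun h => hjA ⟨h, hjk⟩, hj⟩, rfl⟩
  · rintro ⟨α, j, hjA, hj⟩ y h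
    obtain rfl : α = (stdSimplex.δ k).app o y := congr($h.1)
    obtain ⟨i, rfl⟩ := Fin.exists_succAbove_eq fun h : j = k => hjA (h ▸ hk)
    exact ⟨⟨y, i, hjA, fun ⟨x, hx⟩ => hj ⟨x, congrArg k.succAbove hx⟩⟩, rfl, rfl⟩

lemma mem_obj_horn_iff {k : Fin (n + 1)} {m : SimplexCategoryᵒᵖ} (α : Δ[n].obj m) :
    α ∈ (horn.{u} n k).obj m ↔
      ∃ j, j ∉ ({k} : Set _) ∧ j ∉ Set.range (stdSimplex.asOrderHom α) := by
  simp only [mem_horn_iff, Ne, Set.eq_univ_iff_forall, Set.mem_union, not_forall, not_or]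
  exact exists_congr fun _ => and_comm

def isoHorn (k : Fin (n + 1)) : genHorn.{u} n {k} ≅ (Λ[n, k] : SSet) where
  hom := { app _ := TypeCat.ofHom fun α => ⟨α.1, (mem_obj_horn_iff _).2 α.2⟩ }
  inv := { app _ := TypeCat.ofHom fun α => ⟨α.1, (mem_obj_horn_iff _).1 α.2⟩ }

lemma isoHorn_hom_comp_ι (k : Fin (n + 1)) :
    (isoHorn k).hom ≫ (horn n k).ι = genHornInclusion n {k} := rfl

end genHorn

lemma innerAnodyne_genHornInclusion_singleton {n : ℕ} {k : Fin (n + 1)} (h₀ : 0 < (k : ℕ))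
    (hn : (k : ℕ) < n) : InnerAnodyne (genHornInclusion n {k}) :=
  (innerAnodyne_horn_ι h₀ hn).of_isRetractOf (.of_iso _ (genHorn.isoHorn_hom_comp_ι k))

lemma innerAnodyne_genHornInclusion_of_mem {m : ℕ} {A : Set (Fin (m + 2))} {k : Fin (m + 2)}
    (hk : k ∈ A) (hface : InnerAnodyne (genHornInclusion.{u} m (k.succAbove ⁻¹' A)))
    (hrest : InnerAnodyne (genHornInclusion.{u} (m + 1) (A \ {k}))) :
    InnerAnodyne (genHornInclusion.{u} (m + 1) A) := by
  rw [← genHorn.ofSubset_comp_inclusion Set.sdiff_subset]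
  exact (hface.of_isPushout (genHorn.isPushout_mapδ hk)).comp hrest

theorem statement12_general (n : ℕ) (A : Set (Fin (n + 1)))
    (hA : A.Nonempty) (hA' : ∀ i ∈ A, 0 < (i : ℕ) ∧ (i : ℕ) < n) :
    InnerAnodyne (genHornInclusion n A) := by
  induction hN : n + A.ncard using Nat.strong_induction_on generalizing n A with | _ N ih
  obtain ⟨k, hk⟩ := hA
  obtain ⟨m, rfl⟩ : ∃ m, n = m + 1 := Nat.exists_eq_add_one.2 (by have := hA' k hk; omega)
  rcases (A \ {k}).eq_empty_or_nonempty with hAk | hAk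
  · obtain rfl : A = {k} := Set.Subset.antisymm (Set.sdiff_eq_empty.1 hAk) (by simpa)
    exact innerAnodyne_genHornInclusion_singleton (hA' k rfl).1 (hA' k rfl).2
  have hcard : (A \ {k}).ncard < A.ncard := Set.ncard_sdiff_singleton_lt_of_mem hk
  have hB : (k.succAbove ⁻¹' A).Nonempty := by
    obtain ⟨j, hjA, hjk⟩ := hAk
    obtain ⟨i, rfl⟩ := Fin.exists_succAbove_eq hjk
    exact ⟨i, hjA⟩
  refine innerAnodyne_genHornInclusion_of_mem hk ?_ ?_
  · refine ih _ ?_ _ _ hB (fun i hi => Fin.pos_and_lt_of_succAbove (hA' k hk) (hA' _ hi)) rfl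
    rw [Fin.ncard_preimage_succAbove]
    omega
  · exact ih _ (by omega) _ _ hAk (fun i hi => hA' i hi.1) rfl

/-- For `n ≥ 2` and any nonempty `A ⊆ {1,…,n-1}`, the generalized inner horn
inclusion `Λ^A[n] → Δ^n` is inner anodyne.  (For `A = {1,…,n-1}` this is the
inclusion `∂_0Δ^n ∪ ∂_nΔ^n → Δ^n` of the union of the two outer faces.) -/
theorem statement12 (n : ℕ) (hn : 2 ≤ n) (A : Set (Fin (n + 1)))
    (hA : A.Nonempty) (hA' : ∀ i ∈ A, 0 < (i : ℕ) ∧ (i : ℕ) < n) :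
    InnerAnodyne (genHornInclusion n A) :=
  statement12_general n A hA hA'
end
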